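/- Let P and Q be bigraded solid harmonics of bidegrees (m,n) and (m',n') on ℂ^d. Then for z = rζ with r > 0, ζ ∈ S^{2d-1}: ⟨∇^z P(z), ∇^z Q(z)⟩ = (1/r²)⟨∇₀^z P(z), ∇₀^z Q(z)⟩ + (1/(4r²))((3m+n)m' + (m-n)n') P(z) conj(Q(z)). -/

import Mathlib

open Complex MvPolynomial

/-- The ambient partial derivative `D_i F` on `ℝ^{2d}`. -/
noncomputable def ambD (d : ℕ) (F : EuclideanSpace ℝ (Fin d ⊕ Fin d) → ℂ)
    (i : Fin d ⊕ Fin d) (z : EuclideanSpace ℝ (Fin d ⊕ Fin d)) : ℂ :=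
  fderiv ℝ F z (EuclideanSpace.single i 1)

/-- The complex derivative `∂F/∂z_j = (1/2)(∂F/∂x_j - i ∂F/∂y_j)`. -/
noncomputable def ambDZ (d : ℕ) (F : EuclideanSpace ℝ (Fin d ⊕ Fin d) → ℂ)
    (j : Fin d) (z : EuclideanSpace ℝ (Fin d ⊕ Fin d)) : ℂ :=
  (1 / 2) * (ambD d F (Sum.inl j) z - Complex.I * ambD d F (Sum.inr j) z)

/-- The radial derivative `∂/∂r F(rζ)`. -/
noncomputable def radD (d : ℕ) (F : EuclideanSpace ℝ (Fin d ⊕ Fin d) → ℂ)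
    (r : ℝ) (ζ : EuclideanSpace ℝ (Fin d ⊕ Fin d)) : ℂ :=
  deriv (fun t : ℝ => F (t • ζ)) r

/-- The `j`-th component of `∇₀^z F` at `z = rζ`, defined through the decomposition
`∇^z = (1/r)∇₀^z + (1/(2r)) z̄ ∂/∂r`, i.e. `(∇₀^z F)_j = r (∇^z F)_j - (1/2) z̄_j ∂_r F`. -/
noncomputable def sphDZ (d : ℕ) (F : EuclideanSpace ℝ (Fin d ⊕ Fin d) → ℂ)
    (j : Fin d) (r : ℝ) (ζ : EuclideanSpace ℝ (Fin d ⊕ Fin d)) : ℂ :=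
  (r : ℂ) * ambDZ d F j (r • ζ) -
    (1 / 2) * (starRingEnd ℂ) ((r : ℝ) * ζ (Sum.inl j) + Complex.I * ((r : ℝ) * ζ (Sum.inr j))) *
      radD d F r ζ

/-- Multiplication by a complex scalar `l` on `ℂ^d ≅ ℝ^d × ℝ^d`. -/
noncomputable def cSMul (d : ℕ) (l : ℂ) (v : EuclideanSpace ℝ (Fin d ⊕ Fin d)) :
    EuclideanSpace ℝ (Fin d ⊕ Fin d) :=
  (EuclideanSpace.equiv (Fin d ⊕ Fin d) ℝ).symm
    (Sum.elim (fun j => l.re * v (Sum.inl j) - l.im * v (Sum.inr j))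
      (fun j => l.im * v (Sum.inl j) + l.re * v (Sum.inr j)))

/-!
Write `z = rζ`. By definition `∇₀^z = r ∇^z - ½ z̄ ∂_r`, so expanding
`⟨∇₀^z P, ∇₀^z Q⟩` produces `r² ⟨∇^z P, ∇^z Q⟩` plus cross terms in
`∑ z_j ∂P/∂z_j`, `r ∂_r P` and `|z|² = r²`. Differentiating `λ ↦ P(λz) = λ^m λ̄^n P(z)`
at `λ = 1` in the real direction gives `r ∂_r P = (m + n) P`, and combined with the
direction `i` the holomorphic Euler identity `∑ z_j ∂P/∂z_j = m P`. Substituting these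
three facts leaves `P Q̄ ((3m + n) m' + (m - n) n') / 4`.
-/

open ComplexConjugate

theorem differentiable_eval_ofReal {ι : Type*} [Fintype ι] (p : MvPolynomial ι ℂ) :
    Differentiable ℝ fun v : EuclideanSpace ℝ ι => eval (fun i => ((v i : ℝ) : ℂ)) p := by
  induction p using MvPolynomial.induction_on with
  | C a => simp
  | add p q hp hq => simpa only [eval_add] using hp.fun_add hq
  | mul_X p i hp =>
    simp only [eval_mul, eval_X]
    exact hp.fun_mul (ofRealCLM.comp (EuclideanSpace.proj i)).differentiable

theorem fderiv_apply_eq_sum_coord_mul {ι : Type*} [Fintype ι] [DecidableEq ι]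
    (F : EuclideanSpace ℝ ι → ℂ) (v w : EuclideanSpace ℝ ι) :
    fderiv ℝ F v w = ∑ i, (w i : ℂ) * fderiv ℝ F v (EuclideanSpace.single i 1) := by
  conv_lhs => rw [← (EuclideanSpace.basisFun ι ℝ).sum_repr w]
  simp [Complex.real_smul]

theorem hasDerivAt_one_add_mul_pow_mul_pow (c : ℂ) (m n : ℕ) :
    HasDerivAt (fun t : ℝ => (1 + t * c) ^ m * (1 + t * conj c) ^ n)
      (m * c + n * conj c) 0 := by
  have hline : ∀ a : ℂ, HasDerivAt (fun t : ℝ => 1 + t * a) a 0 := fun a => by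
    simpa using ((hasDerivAt_id (0 : ℝ)).ofReal_comp.mul_const a).const_add 1
  simpa using ((hline c).fun_pow m).fun_mul ((hline (conj c)).fun_pow n)

section

variable {d : ℕ}

def zCoord (v : EuclideanSpace ℝ (Fin d ⊕ Fin d)) (j : Fin d) : ℂ :=
  v (Sum.inl j) + I * v (Sum.inr j)

@[simp]
theorem cSMul_apply_inl (l : ℂ) (v : EuclideanSpace ℝ (Fin d ⊕ Fin d)) (j : Fin d) :
    cSMul d l v (Sum.inl j) = l.re * v (Sum.inl j) - l.im * v (Sum.inr j) := rfl

@[simp]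
theorem cSMul_apply_inr (l : ℂ) (v : EuclideanSpace ℝ (Fin d ⊕ Fin d)) (j : Fin d) :
    cSMul d l v (Sum.inr j) = l.im * v (Sum.inl j) + l.re * v (Sum.inr j) := rfl

theorem cSMul_one (v : EuclideanSpace ℝ (Fin d ⊕ Fin d)) : cSMul d 1 v = v := by
  ext (j | j) <;> simp

theorem cSMul_one_add_mul (c : ℂ) (t : ℝ) (v : EuclideanSpace ℝ (Fin d ⊕ Fin d)) :
    cSMul d (1 + t * c) v = v + t • cSMul d c v := by
  ext (j | j) <;> simp <;> ring

theorem sum_zCoord_mul_conj (v : EuclideanSpace ℝ (Fin d ⊕ Fin d)) :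
    ∑ j, zCoord v j * conj (zCoord v j) = ((‖v‖ ^ 2 : ℝ) : ℂ) := by
  simp only [zCoord, mul_conj, mul_comm I, normSq_add_mul_I, EuclideanSpace.real_norm_sq_eq,
    Fintype.sum_sum_type, ← Finset.sum_add_distrib, ofReal_sum]

theorem sphDZ_eq (F : EuclideanSpace ℝ (Fin d ⊕ Fin d) → ℂ) (j : Fin d) (r : ℝ)
    (ζ : EuclideanSpace ℝ (Fin d ⊕ Fin d)) :
    sphDZ d F j r ζ
      = r * ambDZ d F j (r • ζ) - 1 / 2 * conj (zCoord (r • ζ) j) * radD d F r ζ := by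
  simp only [sphDZ, zCoord, PiLp.smul_apply, smul_eq_mul]
  push_cast
  ring

theorem sum_sphDZ_mul_conj (F G : EuclideanSpace ℝ (Fin d ⊕ Fin d) → ℂ) (r : ℝ)
    (ζ : EuclideanSpace ℝ (Fin d ⊕ Fin d)) :
    ∑ j, sphDZ d F j r ζ * conj (sphDZ d G j r ζ)
      = r ^ 2 * ∑ j, ambDZ d F j (r • ζ) * conj (ambDZ d G j (r • ζ))
        - r / 2 * conj (radD d G r ζ) * ∑ j, zCoord (r • ζ) j * ambDZ d F j (r • ζ)
        - r / 2 * radD d F r ζ * conj (∑ j, zCoord (r • ζ) j * ambDZ d G j (r • ζ))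
        + 1 / 4 * radD d F r ζ * conj (radD d G r ζ)
          * ∑ j, zCoord (r • ζ) j * conj (zCoord (r • ζ) j) := by
  simp only [sphDZ_eq, map_sum, Finset.mul_sum, ← Finset.sum_sub_distrib,
    ← Finset.sum_add_distrib]
  refine Finset.sum_congr rfl fun j _ => ?_
  simp only [map_sub, map_mul, map_div₀, map_one, map_ofNat, conj_conj, conj_ofReal]
  ring

theorem sum_zCoord_mul_ambDZ_eq_fderiv (F : EuclideanSpace ℝ (Fin d ⊕ Fin d) → ℂ)
    (v : EuclideanSpace ℝ (Fin d ⊕ Fin d)) :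
    ∑ j, zCoord v j * ambDZ d F j v
      = 1 / 2 * (fderiv ℝ F v v - I * fderiv ℝ F v (cSMul d I v)) := by
  rw [fderiv_apply_eq_sum_coord_mul F v v, fderiv_apply_eq_sum_coord_mul F v (cSMul d I v)]
  simp only [Fintype.sum_sum_type, Finset.mul_sum, ← Finset.sum_add_distrib,
    ← Finset.sum_sub_distrib]
  refine Finset.sum_congr rfl fun j _ => ?_
  simp only [zCoord, ambDZ, ambD, cSMul_apply_inl, cSMul_apply_inr, I_re, I_im]
  push_cast
  linear_combination (-(1 / 2) * (v (Sum.inr j) : ℂ)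
    * fderiv ℝ F v (EuclideanSpace.single (Sum.inr j) 1)) * I_sq

def IsBihomogeneous (d m n : ℕ) (F : EuclideanSpace ℝ (Fin d ⊕ Fin d) → ℂ) : Prop :=
  ∀ (l : ℂ) v, F (cSMul d l v) = l ^ m * conj l ^ n * F v

variable {m n : ℕ} {F : EuclideanSpace ℝ (Fin d ⊕ Fin d) → ℂ}

theorem IsBihomogeneous.fderiv_apply_cSMul_self (hF : IsBihomogeneous d m n F)
    (hdiff : Differentiable ℝ F) (c : ℂ) (v : EuclideanSpace ℝ (Fin d ⊕ Fin d)) :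
    fderiv ℝ F v (cSMul d c v) = (m * c + n * conj c) * F v := by
  have hchain :
      HasDerivAt (fun t : ℝ => F (v + t • cSMul d c v)) (fderiv ℝ F v (cSMul d c v)) 0 := by
    have hline : HasDerivAt (fun t : ℝ => v + t • cSMul d c v) (cSMul d c v) 0 := by
      simpa using ((hasDerivAt_id (0 : ℝ)).smul_const (cSMul d c v)).const_add v
    exact (hdiff v).hasFDerivAt.comp_hasDerivAt_of_eq 0 hline (by simp)
  have hpoly : (fun t : ℝ => F (v + t • cSMul d c v))
      = fun t : ℝ => (1 + t * c) ^ m * (1 + t * conj c) ^ n * F v := by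
    funext t
    rw [← cSMul_one_add_mul, hF]
    simp
  rw [hpoly] at hchain
  exact hchain.unique ((hasDerivAt_one_add_mul_pow_mul_pow c m n).mul_const (F v))

theorem IsBihomogeneous.sum_zCoord_mul_ambDZ (hF : IsBihomogeneous d m n F)
    (hdiff : Differentiable ℝ F) (v : EuclideanSpace ℝ (Fin d ⊕ Fin d)) :
    ∑ j, zCoord v j * ambDZ d F j v = m * F v := by
  have hv := hF.fderiv_apply_cSMul_self hdiff 1 v
  have hIv := hF.fderiv_apply_cSMul_self hdiff I v
  rw [cSMul_one] at hv
  rw [sum_zCoord_mul_ambDZ_eq_fderiv, hv, hIv, map_one, conj_I]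
  linear_combination (-(1 / 2) * ((m : ℂ) - n) * F v) * I_sq

theorem IsBihomogeneous.ofReal_mul_radD (hF : IsBihomogeneous d m n F)
    (hdiff : Differentiable ℝ F) (r : ℝ) (ζ : EuclideanSpace ℝ (Fin d ⊕ Fin d)) :
    r * radD d F r ζ = (m + n) * F (r • ζ) := by
  have hchain : HasDerivAt (fun t : ℝ => F (t • ζ)) (fderiv ℝ F (r • ζ) ζ) r :=
    (hdiff (r • ζ)).hasFDerivAt.comp_hasDerivAt r
      (by simpa using (hasDerivAt_id r).smul_const ζ)
  have hEuler := hF.fderiv_apply_cSMul_self hdiff 1 (r • ζ)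
  rw [cSMul_one, (fderiv ℝ F (r • ζ)).map_smul, Complex.real_smul] at hEuler
  rw [radD, hchain.deriv, hEuler]
  simp

theorem statement12_general (d m n m' n' : ℕ)
    (P Q : EuclideanSpace ℝ (Fin d ⊕ Fin d) → ℂ)
    (p q : MvPolynomial (Fin d ⊕ Fin d) ℂ)
    (hPp : ∀ v, P v = eval (fun i => ((v i : ℝ) : ℂ)) p)
    (hQq : ∀ v, Q v = eval (fun i => ((v i : ℝ) : ℂ)) q)
    (hbidegP : ∀ (l : ℂ) v, P (cSMul d l v) = l ^ m * (starRingEnd ℂ) l ^ n * P v)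
    (hbidegQ : ∀ (l : ℂ) v, Q (cSMul d l v) = l ^ m' * (starRingEnd ℂ) l ^ n' * Q v)
    (r : ℝ) (hr : 0 < r) (ζ : EuclideanSpace ℝ (Fin d ⊕ Fin d)) (hζ : ‖ζ‖ = 1) :
    ∑ j : Fin d, ambDZ d P j (r • ζ) * (starRingEnd ℂ) (ambDZ d Q j (r • ζ))
      = (1 / (r : ℂ) ^ 2) *
          ∑ j : Fin d, sphDZ d P j r ζ * (starRingEnd ℂ) (sphDZ d Q j r ζ)
        + (1 / (4 * (r : ℂ) ^ 2)) *
            ((3 * (m : ℂ) + n) * m' + ((m : ℂ) - n) * n') *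
            P (r • ζ) * (starRingEnd ℂ) (Q (r • ζ)) := by
  have hP : IsBihomogeneous d m n P := hbidegP
  have hQ : IsBihomogeneous d m' n' Q := hbidegQ
  have hPd : Differentiable ℝ P := funext hPp ▸ differentiable_eval_ofReal p
  have hQd : Differentiable ℝ Q := funext hQq ▸ differentiable_eval_ofReal q
  have hr0 : (r : ℂ) ≠ 0 := by exact_mod_cast hr.ne'
  have hz : ∑ j, zCoord (r • ζ) j * conj (zCoord (r • ζ) j) = (r : ℂ) ^ 2 := by
    rw [sum_zCoord_mul_conj, norm_smul, hζ, Real.norm_of_nonneg hr.le]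
    push_cast
    ring
  have hradP : radD d P r ζ = (m + n) * P (r • ζ) / r := by
    rw [← hP.ofReal_mul_radD hPd]
    field_simp
  have hradQ : radD d Q r ζ = (m' + n') * Q (r • ζ) / r := by
    rw [← hQ.ofReal_mul_radD hQd]
    field_simp
  rw [sum_sphDZ_mul_conj, hP.sum_zCoord_mul_ambDZ hPd, hQ.sum_zCoord_mul_ambDZ hQd, hz,
    hradP, hradQ]
  simp only [map_mul, map_div₀, map_add, map_natCast, conj_ofReal]
  field_simp
  ring

/-- Let `P, Q` be bigraded solid harmonics of bidegrees `(m,n)`, `(m',n')`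
on `ℂ^d`.  Then for `z = rζ`, `r > 0`, `ζ ∈ S^{2d-1}`:
`⟨∇^z P(z), ∇^z Q(z)⟩ = (1/r²)⟨∇₀^z P(z), ∇₀^z Q(z)⟩
   + (1/(4r²))((3m+n)m' + (m-n)n') P(z) conj(Q(z))`. -/
theorem statement12 (d m n m' n' : ℕ) (hd : 1 ≤ d)
    (P Q : EuclideanSpace ℝ (Fin d ⊕ Fin d) → ℂ)
    (p q : MvPolynomial (Fin d ⊕ Fin d) ℂ)
    (hPp : ∀ v, P v = eval (fun i => ((v i : ℝ) : ℂ)) p)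
    (hQq : ∀ v, Q v = eval (fun i => ((v i : ℝ) : ℂ)) q)
    (hharmP : (∑ i : Fin d ⊕ Fin d, pderiv i (pderiv i p)) = 0)
    (hharmQ : (∑ i : Fin d ⊕ Fin d, pderiv i (pderiv i q)) = 0)
    (hbidegP : ∀ (l : ℂ) v, P (cSMul d l v) = l ^ m * (starRingEnd ℂ) l ^ n * P v)
    (hbidegQ : ∀ (l : ℂ) v, Q (cSMul d l v) = l ^ m' * (starRingEnd ℂ) l ^ n' * Q v)
    (r : ℝ) (hr : 0 < r) (ζ : EuclideanSpace ℝ (Fin d ⊕ Fin d)) (hζ : ‖ζ‖ = 1) :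
    ∑ j : Fin d, ambDZ d P j (r • ζ) * (starRingEnd ℂ) (ambDZ d Q j (r • ζ))
      = (1 / (r : ℂ) ^ 2) *
          ∑ j : Fin d, sphDZ d P j r ζ * (starRingEnd ℂ) (sphDZ d Q j r ζ)
        + (1 / (4 * (r : ℂ) ^ 2)) *
            ((3 * (m : ℂ) + n) * m' + ((m : ℂ) - n) * n') *
            P (r • ζ) * (starRingEnd ℂ) (Q (r • ζ)) :=
  statement12_general d m n m' n' P Q p q hPp hQq hbidegP hbidegQ r hr ζ hζ
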